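/- Fix real numbers λ1* and λ2* with 0 < λ1* < λ2*. Consider the weighted Laplacian on the path graph P3 with vertex measures 2π, 4π, 2π and positive edge weights w12, w23. There exist positive reals w12, w23 such that the non-zero eigenvalues of this Laplacian are λ1* and λ2* if and only if λ2* ≥ 2λ1*. -/

import Mathlib

open Real

/-- The weighted Laplacian on the path graph `P₃` with vertex measures
`2π, 4π, 2π` and positive edge weights `w12, w23`. -/
noncomputable def pathLaplacian (w12 w23 : ℝ) : Matrix (Fin 3) (Fin 3) ℝ :=
  Matrix.of
    ![![w12 / (2 * π), -(w12 / (2 * π)), 0],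
      ![-(w12 / (4 * π)), (w12 + w23) / (4 * π), -(w23 / (4 * π))],
      ![0, -(w23 / (2 * π)), w23 / (2 * π)]]

/-! The characteristic polynomial of the Laplacian is
`μ (μ² - 3 (w12 + w23) / (4π) μ + w12 w23 / (2π²))`, so prescribing the nonzero eigenvalues
`λ₁ ≠ λ₂` amounts to prescribing `w12 + w23 = 4π (λ₁ + λ₂) / 3` and `w12 w23 = 2π² λ₁ λ₂`.
Positive weights with a given positive sum and product exist iff the discriminant
`(8π² / 9) (λ₂ - 2λ₁) (2λ₂ - λ₁)` is nonnegative, i.e. iff `2λ₁ ≤ λ₂`. -/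

lemma setOf_mul_quadratic_eq_iff {s p a b : ℝ} (ha : a ≠ 0) (hb : b ≠ 0) (hab : a ≠ b) :
    {μ : ℝ | μ * (μ ^ 2 - s * μ + p) = 0} = {0, a, b} ↔ s = a + b ∧ p = a * b := by
  constructor
  · intro h
    have root : ∀ c ≠ (0 : ℝ), c ∈ ({0, a, b} : Set ℝ) → c ^ 2 - s * c + p = 0 := by
      intro c hc hmem
      rw [← h] at hmem
      exact (mul_eq_zero.mp hmem).resolve_left hc
    have hra := root a ha (by simp)
    have hrb := root b hb (by simp)
    have hs : s = a + b := by
      have hdiff : (a - b) * (a + b - s) = 0 := by linear_combination hra - hrb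
      linarith [(mul_eq_zero.mp hdiff).resolve_left (sub_ne_zero.mpr hab)]
    exact ⟨hs, by subst hs; linear_combination hra⟩
  · rintro ⟨rfl, rfl⟩
    ext μ
    have hfactor : μ * (μ ^ 2 - (a + b) * μ + a * b) = μ * ((μ - a) * (μ - b)) := by ring
    rw [Set.mem_ofPred_eq, hfactor]
    simp [sub_eq_zero]

lemma spectrum_pathLaplacian (w12 w23 : ℝ) :
    spectrum ℝ (pathLaplacian w12 w23) =
      {μ | μ * (μ ^ 2 - 3 * (w12 + w23) / (4 * π) * μ + w12 * w23 / (2 * π ^ 2)) = 0} := by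
  ext μ
  have hdet : (algebraMap ℝ _ μ - pathLaplacian w12 w23).det
      = μ * (μ ^ 2 - 3 * (w12 + w23) / (4 * π) * μ + w12 * w23 / (2 * π ^ 2)) := by
    simp [Matrix.det_fin_three, pathLaplacian, Matrix.algebraMap_eq_diagonal]
    field_simp
    ring
  rw [spectrum.mem_iff, Matrix.isUnit_iff_isUnit_det, isUnit_iff_ne_zero, not_not, hdet]
  rfl

lemma spectrum_pathLaplacian_eq_iff {a b : ℝ} (ha : a ≠ 0) (hb : b ≠ 0) (hab : a ≠ b)
    (w12 w23 : ℝ) :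
    spectrum ℝ (pathLaplacian w12 w23) = {0, a, b} ↔
      w12 + w23 = 4 * π * (a + b) / 3 ∧ w12 * w23 = 2 * π ^ 2 * (a * b) := by
  rw [spectrum_pathLaplacian, setOf_mul_quadratic_eq_iff ha hb hab]
  have hπ : π ≠ 0 := pi_ne_zero
  apply and_congr <;> constructor <;> intro h <;> field_simp at h ⊢ <;> linarith

lemma exists_pos_add_eq_mul_eq_iff {S P : ℝ} (hP : 0 < P) :
    (∃ x y : ℝ, 0 < x ∧ 0 < y ∧ x + y = S ∧ x * y = P) ↔ 0 < S ∧ 4 * P ≤ S ^ 2 := by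
  constructor
  · rintro ⟨x, y, hx, hy, rfl, rfl⟩
    exact ⟨by positivity, by nlinarith [sq_nonneg (x - y)]⟩
  · rintro ⟨hS, hdisc⟩
    set r := √(S ^ 2 - 4 * P)
    have hr : r ^ 2 = S ^ 2 - 4 * P := sq_sqrt (by linarith)
    have hr0 : 0 ≤ r := sqrt_nonneg _
    have hrS : r < S := by nlinarith
    exact ⟨(S + r) / 2, (S - r) / 2, by linarith, by linarith, by ring,
      by linear_combination hr / (-4)⟩

/-- For `0 < λ₁* < λ₂*`, there exist positive edge weights `w12, w23` such that
the weighted `P₃` Laplacian has eigenvalues exactly `0, λ₁*, λ₂*` if and only if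
`λ₂* ≥ 2 λ₁*`. -/
theorem stmt2 (lam1 lam2 : ℝ) (h1 : 0 < lam1) (h12 : lam1 < lam2) :
    (∃ w12 w23 : ℝ, 0 < w12 ∧ 0 < w23 ∧
      spectrum ℝ (pathLaplacian w12 w23) = {0, lam1, lam2}) ↔ 2 * lam1 ≤ lam2 := by
  have h2 : 0 < lam2 := h1.trans h12
  simp_rw [spectrum_pathLaplacian_eq_iff h1.ne' h2.ne' h12.ne,
    exists_pos_add_eq_mul_eq_iff (by positivity : 0 < 2 * π ^ 2 * (lam1 * lam2))]
  have discr : (4 * π * (lam1 + lam2) / 3) ^ 2 - 4 * (2 * π ^ 2 * (lam1 * lam2))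
      = 8 * π ^ 2 / 9 * ((lam2 - 2 * lam1) * (2 * lam2 - lam1)) := by ring
  rw [← sub_nonneg, discr, mul_nonneg_iff_of_pos_left (by positivity),
    mul_nonneg_iff_of_pos_right (by linarith), sub_nonneg]
  exact and_iff_right (by positivity)
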